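/- arXiv:nlin/0011039 — 2 statements merged into one kernel-verified Lean document; each statement's English description precedes it below -/
import Mathlib

section
/- Let N ≥ 1, let β_j ∈ ℝ for j ∈ ℤ, and let ψ_j, φ_j : ℝ² → ℝ^N (j ∈ ℤ) be smooth functions of (x, y) such that for every j: (i) ψ_{j,y} = ψ_{j,xx} + 2⟨ψ_j,φ_j⟩ψ_j and −φ_{j,y} = φ_{j,xx} + 2⟨ψ_j,φ_j⟩φ_j (vector NLS), and (ii) ψ_{j,x} = ψ_{j+1} + β_j ψ_j + ⟨ψ_j,φ_{j+1}⟩ψ_j and −φ_{j,x} = φ_{j-1} + β_{j-1} φ_j + ⟨ψ_{j-1},φ_j⟩φ_j (Bäcklund lattice). Define u_j := −2⟨ψ_j,φ_j⟩, f_j := −⟨ψ_j,φ_{j+1}⟩ − β_j, and p_j := ⟨ψ_j, ∂_x φ_{j+1}⟩ − ⟨∂_x ψ_j, φ_{j+1}⟩ + ⟨ψ_j,φ_{j+1}⟩² − β_j². Then for every j: the Miura-type relations u_{j+1} = u_j + 2∂_x f_j, u_j = f_j² − ∂_x f_j + p_j, ∂_x p_j = ∂_y f_j hold, as well as the lattice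 relation ∂_x f_{j+1} + ∂_x f_j = f_{j+1}² − f_j² + p_{j+1} − p_j. -/
noncomputable def pdx {V : Type*} [NormedAddCommGroup V] [NormedSpace ℝ V]
    (f : ℝ → ℝ → V) : ℝ → ℝ → V :=
  fun x y => deriv (fun s => f s y) x

noncomputable def pdy {V : Type*} [NormedAddCommGroup V] [NormedSpace ℝ V]
    (f : ℝ → ℝ → V) : ℝ → ℝ → V :=
  fun x y => deriv (fun s => f x s) y

def dot {N : ℕ} (a b : Fin N → ℝ) : ℝ := ∑ i, a i * b i

section aux

variable {N : ℕ}

lemma dot_add_left (a b c : Fin N → ℝ) : dot (a + b) c = dot a c + dot b c := by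
  simp [dot, add_mul, Finset.sum_add_distrib]

lemma dot_add_right (a b c : Fin N → ℝ) : dot a (b + c) = dot a b + dot a c := by
  simp [dot, mul_add, Finset.sum_add_distrib]

lemma dot_smul_left (r : ℝ) (a b : Fin N → ℝ) : dot (r • a) b = r * dot a b := by
  simp [dot, Finset.mul_sum, mul_assoc]

lemma dot_smul_right (r : ℝ) (a b : Fin N → ℝ) : dot a (r • b) = r * dot a b := by
  simp only [dot, Finset.mul_sum, Pi.smul_apply, smul_eq_mul]
  exact Finset.sum_congr rfl fun i _ => by ring

lemma dot_neg_left (a b : Fin N → ℝ) : dot (-a) b = -dot a b := by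
  simp [dot]

lemma dot_neg_right (a b : Fin N → ℝ) : dot a (-b) = -dot a b := by
  simp [dot]

lemma hasDerivAt_x (F : ℝ → ℝ → Fin N → ℝ)
    (hF : ContDiff ℝ (⊤ : ℕ∞) (fun p : ℝ × ℝ => F p.1 p.2)) (x y : ℝ) :
    HasDerivAt (fun s => F s y) (pdx F x y) x := by
  have hd : Differentiable ℝ (fun s : ℝ => F s y) :=
    (hF.differentiable (by simp)).comp (differentiable_id.prodMk (differentiable_const y))
  exact (hd x).hasDerivAt

lemma hasDerivAt_y (F : ℝ → ℝ → Fin N → ℝ)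
    (hF : ContDiff ℝ (⊤ : ℕ∞) (fun p : ℝ × ℝ => F p.1 p.2)) (x y : ℝ) :
    HasDerivAt (fun t => F x t) (pdy F x y) y := by
  have hd : Differentiable ℝ (fun t : ℝ => F x t) :=
    (hF.differentiable (by simp)).comp ((differentiable_const x).prodMk differentiable_id)
  exact (hd y).hasDerivAt

lemma hasDerivAt_dot_x (F G : ℝ → ℝ → Fin N → ℝ)
    (hF : ContDiff ℝ (⊤ : ℕ∞) (fun p : ℝ × ℝ => F p.1 p.2))
    (hG : ContDiff ℝ (⊤ : ℕ∞) (fun p : ℝ × ℝ => G p.1 p.2)) (x y : ℝ) :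
    HasDerivAt (fun s => dot (F s y) (G s y))
      (dot (pdx F x y) (G x y) + dot (F x y) (pdx G x y)) x := by
  have h1 := hasDerivAt_x F hF x y
  have h2 := hasDerivAt_x G hG x y
  have h1i : ∀ i, HasDerivAt (fun s => F s y i) (pdx F x y i) x := hasDerivAt_pi.mp h1
  have h2i : ∀ i, HasDerivAt (fun s => G s y i) (pdx G x y i) x := hasDerivAt_pi.mp h2
  have H : HasDerivAt (fun s => ∑ i : Fin N, F s y i * G s y i)
      (∑ i : Fin N, (pdx F x y i * G x y i + F x y i * pdx G x y i)) x :=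
    HasDerivAt.fun_sum (fun i _ => (h1i i).mul (h2i i))
  simpa [dot, Finset.sum_add_distrib] using H

lemma hasDerivAt_dot_y (F G : ℝ → ℝ → Fin N → ℝ)
    (hF : ContDiff ℝ (⊤ : ℕ∞) (fun p : ℝ × ℝ => F p.1 p.2))
    (hG : ContDiff ℝ (⊤ : ℕ∞) (fun p : ℝ × ℝ => G p.1 p.2)) (x y : ℝ) :
    HasDerivAt (fun t => dot (F x t) (G x t))
      (dot (pdy F x y) (G x y) + dot (F x y) (pdy G x y)) y := by
  have h1 := hasDerivAt_y F hF x y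
  have h2 := hasDerivAt_y G hG x y
  have h1i : ∀ i, HasDerivAt (fun t => F x t i) (pdy F x y i) y := hasDerivAt_pi.mp h1
  have h2i : ∀ i, HasDerivAt (fun t => G x t i) (pdy G x y i) y := hasDerivAt_pi.mp h2
  have H : HasDerivAt (fun t => ∑ i : Fin N, F x t i * G x t i)
      (∑ i : Fin N, (pdy F x y i * G x y i + F x y i * pdy G x y i)) y :=
    HasDerivAt.fun_sum (fun i _ => (h1i i).mul (h2i i))
  simpa [dot, Finset.sum_add_distrib] using H

end aux

theorem vector_NLS_Backlund_gives_Miura_and_dressing_chain (N : ℕ) (hN : 1 ≤ N)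
    (β : ℤ → ℝ) (ψ φ : ℤ → ℝ → ℝ → (Fin N → ℝ))
    (hψ : ∀ j, ContDiff ℝ (⊤ : ℕ∞) (fun p : ℝ × ℝ => ψ j p.1 p.2))
    (hφ : ∀ j, ContDiff ℝ (⊤ : ℕ∞) (fun p : ℝ × ℝ => φ j p.1 p.2))
    (hNLS₁ : ∀ j x y, pdy (ψ j) x y =
      pdx (pdx (ψ j)) x y + (2 * dot (ψ j x y) (φ j x y)) • ψ j x y)
    (hNLS₂ : ∀ j x y, -pdy (φ j) x y =
      pdx (pdx (φ j)) x y + (2 * dot (ψ j x y) (φ j x y)) • φ j x y)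
    (hBT₁ : ∀ j x y, pdx (ψ j) x y =
      ψ (j + 1) x y + β j • ψ j x y + dot (ψ j x y) (φ (j + 1) x y) • ψ j x y)
    (hBT₂ : ∀ j x y, -pdx (φ j) x y =
      φ (j - 1) x y + β (j - 1) • φ j x y + dot (ψ (j - 1) x y) (φ j x y) • φ j x y)
    (u f p : ℤ → ℝ → ℝ → ℝ)
    (hu : ∀ j x y, u j x y = -2 * dot (ψ j x y) (φ j x y))
    (hf : ∀ j x y, f j x y = -dot (ψ j x y) (φ (j + 1) x y) - β j)
    (hp : ∀ j x y, p j x y =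
      dot (ψ j x y) (pdx (φ (j + 1)) x y) - dot (pdx (ψ j) x y) (φ (j + 1) x y)
        + dot (ψ j x y) (φ (j + 1) x y) ^ 2 - β j ^ 2) :
    ∀ j x y,
      u (j + 1) x y = u j x y + 2 * pdx (f j) x y ∧
      u j x y = f j x y ^ 2 - pdx (f j) x y + p j x y ∧
      pdx (p j) x y = pdy (f j) x y ∧
      pdx (f (j + 1)) x y + pdx (f j) x y =
        f (j + 1) x y ^ 2 - f j x y ^ 2 + p (j + 1) x y - p j x y := by
  -- pdx of φ at shifted index
  have hφx : ∀ k x y, pdx (φ k) x y =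
      -(φ (k - 1) x y + β (k - 1) • φ k x y + dot (ψ (k - 1) x y) (φ k x y) • φ k x y) :=
    fun k x y => neg_eq_iff_eq_neg.mp (hBT₂ k x y)
  have hφx' : ∀ k x y, pdx (φ (k + 1)) x y =
      -(φ k x y + β k • φ (k + 1) x y + dot (ψ k x y) (φ (k + 1) x y) • φ (k + 1) x y) := by
    intro k x y
    have h := hφx (k + 1) x y
    simpa using h
  -- x-derivative of f
  have hfx : ∀ k x y, pdx (f k) x y =
      dot (ψ k x y) (φ k x y) - dot (ψ (k + 1) x y) (φ (k + 1) x y) := by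
    intro k x y
    have hfun : (fun s => f k s y) = fun s => -dot (ψ k s y) (φ (k + 1) s y) - β k :=
      funext fun s => hf k s y
    have H : HasDerivAt (fun s => -dot (ψ k s y) (φ (k + 1) s y) - β k)
        (-(dot (pdx (ψ k) x y) (φ (k + 1) x y) + dot (ψ k x y) (pdx (φ (k + 1)) x y))) x :=
      ((hasDerivAt_dot_x (ψ k) (φ (k + 1)) (hψ k) (hφ (k + 1)) x y).neg).sub_const (β k)
    have e : pdx (f k) x y =
        -(dot (pdx (ψ k) x y) (φ (k + 1) x y) + dot (ψ k x y) (pdx (φ (k + 1)) x y)) := by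
      show deriv (fun s => f k s y) x = _
      rw [hfun]; exact H.deriv
    rw [e, hBT₁ k x y, hφx' k x y]
    simp only [dot_add_left, dot_add_right, dot_smul_left, dot_smul_right,
      dot_neg_left, dot_neg_right]
    ring
  -- reduced form of p
  have hpr : ∀ k x y, p k x y =
      -dot (ψ k x y) (φ k x y) - dot (ψ (k + 1) x y) (φ (k + 1) x y)
        - (dot (ψ k x y) (φ (k + 1) x y) + β k) ^ 2 := by
    intro k x y
    rw [hp k x y, hBT₁ k x y, hφx' k x y]
    simp only [dot_add_left, dot_add_right, dot_smul_left, dot_smul_right,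
      dot_neg_left, dot_neg_right]
    ring
  -- second x-derivatives
  have hxxψ : ∀ k x y, pdx (pdx (ψ k)) x y =
      pdx (ψ (k + 1)) x y + β k • pdx (ψ k) x y +
        (dot (ψ k x y) (φ (k + 1) x y) • pdx (ψ k) x y +
          (dot (pdx (ψ k) x y) (φ (k + 1) x y) + dot (ψ k x y) (pdx (φ (k + 1)) x y)) • ψ k x y) := by
    intro k x y
    have hfun : (fun s => pdx (ψ k) s y) =
        fun s => ψ (k + 1) s y + β k • ψ k s y + dot (ψ k s y) (φ (k + 1) s y) • ψ k s y :=
      funext fun s => hBT₁ k s y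
    have H : HasDerivAt
        (fun s => ψ (k + 1) s y + β k • ψ k s y + dot (ψ k s y) (φ (k + 1) s y) • ψ k s y)
        (pdx (ψ (k + 1)) x y + β k • pdx (ψ k) x y +
          (dot (ψ k x y) (φ (k + 1) x y) • pdx (ψ k) x y +
            (dot (pdx (ψ k) x y) (φ (k + 1) x y) + dot (ψ k x y) (pdx (φ (k + 1)) x y)) • ψ k x y)) x :=
      ((hasDerivAt_x (ψ (k + 1)) (hψ (k + 1)) x y).add
        ((hasDerivAt_x (ψ k) (hψ k) x y).const_smul (β k))).add
        ((hasDerivAt_dot_x (ψ k) (φ (k + 1)) (hψ k) (hφ (k + 1)) x y).smul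
          (hasDerivAt_x (ψ k) (hψ k) x y))
    show deriv (fun s => pdx (ψ k) s y) x = _
    rw [hfun]; exact H.deriv
  have hxxφ : ∀ k x y, pdx (pdx (φ (k + 1))) x y =
      -(pdx (φ k) x y + β k • pdx (φ (k + 1)) x y +
        (dot (ψ k x y) (φ (k + 1) x y) • pdx (φ (k + 1)) x y +
          (dot (pdx (ψ k) x y) (φ (k + 1) x y) + dot (ψ k x y) (pdx (φ (k + 1)) x y)) • φ (k + 1) x y)) := by
    intro k x y
    have hfun : (fun s => pdx (φ (k + 1)) s y) =
        fun s => -(φ k s y + β k • φ (k + 1) s y + dot (ψ k s y) (φ (k + 1) s y) • φ (k + 1) s y) :=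
      funext fun s => hφx' k s y
    have H : HasDerivAt
        (fun s => -(φ k s y + β k • φ (k + 1) s y + dot (ψ k s y) (φ (k + 1) s y) • φ (k + 1) s y))
        (-(pdx (φ k) x y + β k • pdx (φ (k + 1)) x y +
          (dot (ψ k x y) (φ (k + 1) x y) • pdx (φ (k + 1)) x y +
            (dot (pdx (ψ k) x y) (φ (k + 1) x y) + dot (ψ k x y) (pdx (φ (k + 1)) x y)) • φ (k + 1) x y))) x :=
      (((hasDerivAt_x (φ k) (hφ k) x y).add
        ((hasDerivAt_x (φ (k + 1)) (hφ (k + 1)) x y).const_smul (β k))).add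
        ((hasDerivAt_dot_x (ψ k) (φ (k + 1)) (hψ k) (hφ (k + 1)) x y).smul
          (hasDerivAt_x (φ (k + 1)) (hφ (k + 1)) x y))).neg
    show deriv (fun s => pdx (φ (k + 1)) s y) x = _
    rw [hfun]; exact H.deriv
  intro j x y
  refine ⟨?_, ?_, ?_, ?_⟩
  · rw [hu, hu, hfx]; ring
  · rw [hu, hf, hfx, hpr]; ring
  · -- pdx p = pdy f
    have hfun : (fun s => p j s y) = fun s =>
        -dot (ψ j s y) (φ j s y) - dot (ψ (j + 1) s y) (φ (j + 1) s y)
          - (dot (ψ j s y) (φ (j + 1) s y) + β j) ^ 2 :=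
      funext fun s => hpr j s y
    have Hp : HasDerivAt (fun s =>
        -dot (ψ j s y) (φ j s y) - dot (ψ (j + 1) s y) (φ (j + 1) s y)
          - (dot (ψ j s y) (φ (j + 1) s y) + β j) ^ 2)
        (-(dot (pdx (ψ j) x y) (φ j x y) + dot (ψ j x y) (pdx (φ j) x y))
          - (dot (pdx (ψ (j + 1)) x y) (φ (j + 1) x y) + dot (ψ (j + 1) x y) (pdx (φ (j + 1)) x y))
          - (2 : ℕ) * (dot (ψ j x y) (φ (j + 1) x y) + β j) ^ (2 - 1) *
            (dot (pdx (ψ j) x y) (φ (j + 1) x y) + dot (ψ j x y) (pdx (φ (j + 1)) x y))) x :=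
      (((hasDerivAt_dot_x (ψ j) (φ j) (hψ j) (hφ j) x y).neg).sub
        (hasDerivAt_dot_x (ψ (j + 1)) (φ (j + 1)) (hψ (j + 1)) (hφ (j + 1)) x y)).sub
        (((hasDerivAt_dot_x (ψ j) (φ (j + 1)) (hψ j) (hφ (j + 1)) x y).add_const (β j)).pow 2)
    have e1 := Hp.deriv
    have hfun2 : (fun t => f j x t) = fun t => -dot (ψ j x t) (φ (j + 1) x t) - β j :=
      funext fun t => hf j x t
    have Hf : HasDerivAt (fun t => -dot (ψ j x t) (φ (j + 1) x t) - β j)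
        (-(dot (pdy (ψ j) x y) (φ (j + 1) x y) + dot (ψ j x y) (pdy (φ (j + 1)) x y))) y :=
      ((hasDerivAt_dot_y (ψ j) (φ (j + 1)) (hψ j) (hφ (j + 1)) x y).neg).sub_const (β j)
    have e2 : pdy (f j) x y =
        -(dot (pdy (ψ j) x y) (φ (j + 1) x y) + dot (ψ j x y) (pdy (φ (j + 1)) x y)) := by
      show deriv (fun t => f j x t) y = _
      rw [hfun2]; exact Hf.deriv
    have hφy : pdy (φ (j + 1)) x y =
        -(pdx (pdx (φ (j + 1))) x y +
          (2 * dot (ψ (j + 1) x y) (φ (j + 1) x y)) • φ (j + 1) x y) :=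
      neg_eq_iff_eq_neg.mp (hNLS₂ (j + 1) x y)
    rw [show pdx (p j) x y = deriv (fun s => p j s y) x from rfl, hfun, e1, e2, hNLS₁ j x y, hφy, hxxψ j x y, hxxφ j x y,
      hBT₁ (j + 1) x y, hBT₁ j x y, hφx' j x y, hφx j x y]
    simp only [dot_add_left, dot_add_right, dot_smul_left, dot_smul_right,
      dot_neg_left, dot_neg_right]
    push_cast
    ring
  · rw [hfx, hfx, hf, hf, hpr, hpr]; ring
end

section
/- Let M, N ≥ 1, let β_j ∈ ℝ for j ∈ ℤ, and let ψ_j : ℝ² → Mat_{M,N}(ℝ), φ_j : ℝ² → Mat_{N,M}(ℝ) (j ∈ ℤ) be smooth functions of (x, y) such that for every j: (i) ψ_{j,y} = ψ_{j,xx} + 2ψ_jφ_jψ_j and −φ_{j,y} = φ_{j,xx} + 2φ_jψ_jφ_j (matrix NLS), and (ii) ψ_{j,x} = ψ_{j+1} + β_jψ_j + ψ_jφ_{j+1}ψ_j and −φ_{j,x} = φ_{j-1} + β_{j-1}φ_j + φ_jψ_{j-1}φ_j (matrix Bäcklund lattice). Define the M×M-matrix-valued functions u_j := −2ψ_jφ_j,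 f_j := −ψ_jφ_{j+1} − β_j I_M, and p_j := ψ_j ∂_x(φ_{j+1}) − (∂_x ψ_j)φ_{j+1} + ψ_jφ_{j+1}ψ_jφ_{j+1} − β_j² I_M. Then for every j: u_{j+1} = u_j + 2∂_x f_j, u_j = f_j² − ∂_x f_j + p_j, ∂_x f_{j+1} + ∂_x f_j = f_{j+1}² − f_j² + p_{j+1} − p_j, and ∂_x p_j = ∂_y f_j + [p_j, f_j]. -/
def mmul {M N K : ℕ} (A : Fin M → Fin N → ℝ) (B : Fin N → Fin K → ℝ) :
    Fin M → Fin K → ℝ :=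
  fun i k => ∑ j, A i j * B j k

def idm {M : ℕ} : Fin M → Fin M → ℝ := fun i j => if i = j then (1 : ℝ) else 0

def mcomm {M : ℕ} (A B : Fin M → Fin M → ℝ) : Fin M → Fin M → ℝ :=
  mmul A B - mmul B A

noncomputable def minv {M : ℕ} (A : Fin M → Fin M → ℝ) : Fin M → Fin M → ℝ :=
  (Matrix.of A)⁻¹

section algebra
variable {m n k : ℕ}

lemma mmul_add (A : Fin m → Fin n → ℝ) (B C : Fin n → Fin k → ℝ) :
    mmul A (B + C) = mmul A B + mmul A C := by
  funext i l; simp [mmul, mul_add, Finset.sum_add_distrib]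

lemma add_mmul (A B : Fin m → Fin n → ℝ) (C : Fin n → Fin k → ℝ) :
    mmul (A + B) C = mmul A C + mmul B C := by
  funext i l; simp [mmul, add_mul, Finset.sum_add_distrib]

lemma neg_mmul (A : Fin m → Fin n → ℝ) (B : Fin n → Fin k → ℝ) :
    mmul (-A) B = -mmul A B := by
  funext i l; simp [mmul]

lemma mmul_neg (A : Fin m → Fin n → ℝ) (B : Fin n → Fin k → ℝ) :
    mmul A (-B) = -mmul A B := by
  funext i l; simp [mmul]

lemma mmul_sub (A : Fin m → Fin n → ℝ) (B C : Fin n → Fin k → ℝ) :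
    mmul A (B - C) = mmul A B - mmul A C := by
  funext i l; simp [mmul, mul_sub, Finset.sum_sub_distrib]

lemma sub_mmul (A B : Fin m → Fin n → ℝ) (C : Fin n → Fin k → ℝ) :
    mmul (A - B) C = mmul A C - mmul B C := by
  funext i l; simp [mmul, sub_mul, Finset.sum_sub_distrib]

lemma smul_mmul (r : ℝ) (A : Fin m → Fin n → ℝ) (B : Fin n → Fin k → ℝ) :
    mmul (r • A) B = r • mmul A B := by
  funext i l; simp [mmul, Finset.mul_sum, mul_assoc]

lemma mmul_smul (r : ℝ) (A : Fin m → Fin n → ℝ) (B : Fin n → Fin k → ℝ) :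
    mmul A (r • B) = r • mmul A B := by
  funext i l; simp [mmul, Finset.mul_sum, mul_assoc]
  congr 1; funext j; ring

lemma mmul_assoc {p : ℕ} (A : Fin m → Fin n → ℝ) (B : Fin n → Fin k → ℝ)
    (C : Fin k → Fin p → ℝ) : mmul (mmul A B) C = mmul A (mmul B C) := by
  funext i l
  simp only [mmul, Finset.sum_mul, Finset.mul_sum, mul_assoc]
  exact Finset.sum_comm

lemma mmul_idm (A : Fin m → Fin n → ℝ) : mmul A idm = A := by
  funext i l; simp [mmul, idm]

lemma idm_mmul (A : Fin m → Fin n → ℝ) : mmul idm A = A := by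
  funext i l; simp [mmul, idm]

end algebra

section calc1
variable {m n k : ℕ}

lemma hasDerivAt_mmul {F : ℝ → (Fin m → Fin n → ℝ)} {G : ℝ → (Fin n → Fin k → ℝ)}
    {F' : Fin m → Fin n → ℝ} {G' : Fin n → Fin k → ℝ} {x : ℝ}
    (hF : HasDerivAt F F' x) (hG : HasDerivAt G G' x) :
    HasDerivAt (fun t => mmul (F t) (G t)) (mmul F' (G x) + mmul (F x) G') x := by
  rw [hasDerivAt_pi]
  intro i
  rw [hasDerivAt_pi]
  intro l
  have hFe : ∀ jj, HasDerivAt (fun t => F t i jj) (F' i jj) x := fun jj =>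
    hasDerivAt_pi.1 (hasDerivAt_pi.1 hF i) jj
  have hGe : ∀ jj, HasDerivAt (fun t => G t jj l) (G' jj l) x := fun jj =>
    hasDerivAt_pi.1 (hasDerivAt_pi.1 hG jj) l
  have h : HasDerivAt (fun t => ∑ jj : Fin n, F t i jj * G t jj l)
      (∑ jj : Fin n, (F' i jj * G x jj l + F x i jj * G' jj l)) x :=
    HasDerivAt.fun_sum fun jj _ => (hFe jj).mul (hGe jj)
  simpa [mmul, Finset.sum_add_distrib] using h

lemma hasDerivAt_slice_x {V : Type*} [NormedAddCommGroup V] [NormedSpace ℝ V]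
    {F : ℝ → ℝ → V} (h : ContDiff ℝ (⊤ : ℕ∞) (fun p : ℝ × ℝ => F p.1 p.2)) (x y : ℝ) :
    HasDerivAt (fun s => F s y) (pdx F x y) x := by
  have hd : DifferentiableAt ℝ (fun s => F s y) x := by
    have he : (fun s => F s y) = (fun p : ℝ × ℝ => F p.1 p.2) ∘ (fun s => (s, y)) := rfl
    rw [he]
    exact ((h.differentiable (by simp)) (x, y)).comp x
      (differentiableAt_id.prodMk (differentiableAt_const y))
  exact hd.hasDerivAt

lemma hasDerivAt_slice_y {V : Type*} [NormedAddCommGroup V] [NormedSpace ℝ V]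
    {F : ℝ → ℝ → V} (h : ContDiff ℝ (⊤ : ℕ∞) (fun p : ℝ × ℝ => F p.1 p.2)) (x y : ℝ) :
    HasDerivAt (fun s => F x s) (pdy F x y) y := by
  have hd : DifferentiableAt ℝ (fun s => F x s) y := by
    have he : (fun s => F x s) = (fun p : ℝ × ℝ => F p.1 p.2) ∘ (fun s => (x, s)) := rfl
    rw [he]
    exact ((h.differentiable (by simp)) (x, y)).comp y
      ((differentiableAt_const x).prodMk differentiableAt_id)
  exact hd.hasDerivAt

end calc1

theorem matrix_NLS_Backlund_gives_Miura_and_lattice (M N : ℕ) (hM : 1 ≤ M) (hN : 1 ≤ N)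
    (β : ℤ → ℝ)
    (ψ : ℤ → ℝ → ℝ → (Fin M → Fin N → ℝ)) (φ : ℤ → ℝ → ℝ → (Fin N → Fin M → ℝ))
    (hψ : ∀ j, ContDiff ℝ (⊤ : ℕ∞) (fun p : ℝ × ℝ => ψ j p.1 p.2))
    (hφ : ∀ j, ContDiff ℝ (⊤ : ℕ∞) (fun p : ℝ × ℝ => φ j p.1 p.2))
    (hNLS₁ : ∀ j x y, pdy (ψ j) x y =
      pdx (pdx (ψ j)) x y + (2 : ℝ) • mmul (mmul (ψ j x y) (φ j x y)) (ψ j x y))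
    (hNLS₂ : ∀ j x y, -pdy (φ j) x y =
      pdx (pdx (φ j)) x y + (2 : ℝ) • mmul (mmul (φ j x y) (ψ j x y)) (φ j x y))
    (hBT₁ : ∀ j x y, pdx (ψ j) x y = ψ (j + 1) x y + β j • ψ j x y
        + mmul (mmul (ψ j x y) (φ (j + 1) x y)) (ψ j x y))
    (hBT₂ : ∀ j x y, -pdx (φ j) x y = φ (j - 1) x y + β (j - 1) • φ j x y
        + mmul (mmul (φ j x y) (ψ (j - 1) x y)) (φ j x y))
    (u f p : ℤ → ℝ → ℝ → (Fin M → Fin M → ℝ))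
    (hu : ∀ j x y, u j x y = (-2 : ℝ) • mmul (ψ j x y) (φ j x y))
    (hf : ∀ j x y, f j x y = -mmul (ψ j x y) (φ (j + 1) x y) - β j • idm)
    (hp : ∀ j x y, p j x y =
      mmul (ψ j x y) (pdx (φ (j + 1)) x y) - mmul (pdx (ψ j) x y) (φ (j + 1) x y)
        + mmul (mmul (mmul (ψ j x y) (φ (j + 1) x y)) (ψ j x y)) (φ (j + 1) x y)
        - β j ^ 2 • idm) :
    ∀ j x y,
      u (j + 1) x y = u j x y + (2 : ℝ) • pdx (f j) x y ∧
      u j x y = mmul (f j x y) (f j x y) - pdx (f j) x y + p j x y ∧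
      pdx (f (j + 1)) x y + pdx (f j) x y =
        mmul (f (j + 1) x y) (f (j + 1) x y) - mmul (f j x y) (f j x y)
          + p (j + 1) x y - p j x y ∧
      pdx (p j) x y = pdy (f j) x y + mcomm (p j x y) (f j x y) := by
  -- value of pdx (φ (j+1)) via the Bäcklund relation
  have hd'' : ∀ j x y, pdx (φ (j + 1)) x y = -(φ j x y + β j • φ (j + 1) x y
      + mmul (mmul (φ (j + 1) x y) (ψ j x y)) (φ (j + 1) x y)) := by
    intro j x y
    have h2 := hBT₂ (j + 1) x y
    simp only [add_sub_cancel_right] at h2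
    exact neg_eq_iff_eq_neg.mp h2
  -- value of pdx (f j)
  have hfx : ∀ j x y, pdx (f j) x y = -(mmul (pdx (ψ j) x y) (φ (j + 1) x y)
      + mmul (ψ j x y) (pdx (φ (j + 1)) x y)) := by
    intro j x y
    have hax := hasDerivAt_slice_x (hψ j) x y
    have hdx := hasDerivAt_slice_x (hφ (j + 1)) x y
    have hfun : (fun s => f j s y)
        = fun s => -mmul (ψ j s y) (φ (j + 1) s y) - β j • idm := funext fun s => hf j s y
    have hD := ((hasDerivAt_mmul hax hdx).neg).sub_const (β j • idm)
    show deriv (fun s => f j s y) x = _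
    rw [hfun]
    exact hD.deriv
  -- claims 1 and 2
  have key12 : ∀ j x y, (u (j + 1) x y = u j x y + (2 : ℝ) • pdx (f j) x y) ∧
      (u j x y = mmul (f j x y) (f j x y) - pdx (f j) x y + p j x y) := by
    intro j x y
    constructor
    · rw [hu (j + 1) x y, hu j x y, hfx j x y, hBT₁ j x y, hd'' j x y]
      simp only [mmul_add, add_mmul, mmul_neg, neg_mmul, mmul_sub, sub_mmul, smul_mmul,
        mmul_smul, mmul_assoc, mmul_idm, idm_mmul, smul_add, smul_sub, smul_neg, smul_smul]
      module
    · rw [hu j x y, hp j x y, hf j x y, hfx j x y, hBT₁ j x y, hd'' j x y]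
      simp only [mmul_add, add_mmul, mmul_neg, neg_mmul, mmul_sub, sub_mmul, smul_mmul,
        mmul_smul, mmul_assoc, mmul_idm, idm_mmul, smul_add, smul_sub, smul_neg, smul_smul]
      module
  -- polynomial form of p
  have hPf : ∀ j x y, p j x y = -mmul (ψ j x y) (φ j x y)
      - mmul (ψ (j + 1) x y) (φ (j + 1) x y)
      - (2 * β j) • mmul (ψ j x y) (φ (j + 1) x y)
      - mmul (mmul (mmul (ψ j x y) (φ (j + 1) x y)) (ψ j x y)) (φ (j + 1) x y)
      - β j ^ 2 • idm := by
    intro j x y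
    rw [hp j x y, hBT₁ j x y, hd'' j x y]
    simp only [mmul_add, add_mmul, mmul_neg, neg_mmul, mmul_sub, sub_mmul, smul_mmul,
      mmul_smul, mmul_assoc, mmul_idm, idm_mmul, smul_add, smul_sub, smul_neg, smul_smul]
    module
  -- claim 4
  have key4 : ∀ j x y, pdx (p j) x y = pdy (f j) x y + mcomm (p j x y) (f j x y) := by
    intro j x y
    have hax := hasDerivAt_slice_x (hψ j) x y
    have hbx := hasDerivAt_slice_x (hφ j) x y
    have hcx := hasDerivAt_slice_x (hψ (j + 1)) x y
    have hdx := hasDerivAt_slice_x (hφ (j + 1)) x y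
    -- value of pdx (p j)
    have hpx : pdx (p j) x y =
        -(mmul (pdx (ψ j) x y) (φ j x y) + mmul (ψ j x y) (pdx (φ j) x y))
        - (mmul (pdx (ψ (j + 1)) x y) (φ (j + 1) x y)
            + mmul (ψ (j + 1) x y) (pdx (φ (j + 1)) x y))
        - (2 * β j) • (mmul (pdx (ψ j) x y) (φ (j + 1) x y)
            + mmul (ψ j x y) (pdx (φ (j + 1)) x y))
        - (mmul (mmul (mmul (pdx (ψ j) x y) (φ (j + 1) x y)
              + mmul (ψ j x y) (pdx (φ (j + 1)) x y)) (ψ j x y)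
            + mmul (mmul (ψ j x y) (φ (j + 1) x y)) (pdx (ψ j) x y)) (φ (j + 1) x y)
            + mmul (mmul (mmul (ψ j x y) (φ (j + 1) x y)) (ψ j x y)) (pdx (φ (j + 1)) x y)) := by
      have hfun : (fun s => p j s y) = fun s => -mmul (ψ j s y) (φ j s y)
          - mmul (ψ (j + 1) s y) (φ (j + 1) s y)
          - (2 * β j) • mmul (ψ j s y) (φ (j + 1) s y)
          - mmul (mmul (mmul (ψ j s y) (φ (j + 1) s y)) (ψ j s y)) (φ (j + 1) s y)
          - β j ^ 2 • idm := funext fun s => hPf j s y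
      have hD := (((((hasDerivAt_mmul hax hbx).neg).sub
            (hasDerivAt_mmul hcx hdx)).sub
            (HasDerivAt.const_smul (2 * β j) (hasDerivAt_mmul hax hdx))).sub
            (hasDerivAt_mmul (hasDerivAt_mmul (hasDerivAt_mmul hax hdx) hax) hdx)).sub_const
            (β j ^ 2 • idm)
      show deriv (fun s => p j s y) x = _
      rw [hfun]
      exact hD.deriv
    -- value of pdy (f j)
    have hfy : pdy (f j) x y = -(mmul (pdy (ψ j) x y) (φ (j + 1) x y)
        + mmul (ψ j x y) (pdy (φ (j + 1)) x y)) := by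
      have hay := hasDerivAt_slice_y (hψ j) x y
      have hdy := hasDerivAt_slice_y (hφ (j + 1)) x y
      have hfun : (fun s => f j x s)
          = fun s => -mmul (ψ j x s) (φ (j + 1) x s) - β j • idm := funext fun s => hf j x s
      have hD := ((hasDerivAt_mmul hay hdy).neg).sub_const (β j • idm)
      show deriv (fun s => f j x s) y = _
      rw [hfun]
      exact hD.deriv
    -- second x-derivatives
    have hψxx : pdx (pdx (ψ j)) x y = pdx (ψ (j + 1)) x y + β j • pdx (ψ j) x y
        + (mmul (mmul (pdx (ψ j) x y) (φ (j + 1) x y)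
            + mmul (ψ j x y) (pdx (φ (j + 1)) x y)) (ψ j x y)
          + mmul (mmul (ψ j x y) (φ (j + 1) x y)) (pdx (ψ j) x y)) := by
      have hfun : (fun s => pdx (ψ j) s y) = fun s => ψ (j + 1) s y + β j • ψ j s y
          + mmul (mmul (ψ j s y) (φ (j + 1) s y)) (ψ j s y) := funext fun s => hBT₁ j s y
      have hD := (hcx.add (HasDerivAt.const_smul (β j) hax)).add
        (hasDerivAt_mmul (hasDerivAt_mmul hax hdx) hax)
      show deriv (fun s => pdx (ψ j) s y) x = _
      rw [hfun]
      exact hD.deriv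
    have hφxx : pdx (pdx (φ (j + 1))) x y = -(pdx (φ j) x y + β j • pdx (φ (j + 1)) x y
        + (mmul (mmul (pdx (φ (j + 1)) x y) (ψ j x y)
            + mmul (φ (j + 1) x y) (pdx (ψ j) x y)) (φ (j + 1) x y)
          + mmul (mmul (φ (j + 1) x y) (ψ j x y)) (pdx (φ (j + 1)) x y))) := by
      have hfun : (fun s => pdx (φ (j + 1)) s y) = fun s => -(φ j s y + β j • φ (j + 1) s y
          + mmul (mmul (φ (j + 1) s y) (ψ j s y)) (φ (j + 1) s y)) := funext fun s => hd'' j s y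
      have hD := ((hbx.add (HasDerivAt.const_smul (β j) hdx)).add
        (hasDerivAt_mmul (hasDerivAt_mmul hdx hax) hdx)).neg
      show deriv (fun s => pdx (φ (j + 1)) s y) x = _
      rw [hfun]
      exact hD.deriv
    have hφy : pdy (φ (j + 1)) x y = -(pdx (pdx (φ (j + 1))) x y
        + (2 : ℝ) • mmul (mmul (φ (j + 1) x y) (ψ (j + 1) x y)) (φ (j + 1) x y)) :=
      neg_eq_iff_eq_neg.mp (hNLS₂ (j + 1) x y)
    rw [hpx, hfy, hNLS₁ j x y, hφy, hψxx, hφxx]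
    simp only [mcomm]
    rw [hPf j x y, hf j x y, hBT₁ j x y, hd'' j x y]
    simp only [mmul_add, add_mmul, mmul_neg, neg_mmul, mmul_sub, sub_mmul, smul_mmul,
      mmul_smul, mmul_assoc, mmul_idm, idm_mmul, smul_add, smul_sub, smul_neg, smul_smul]
    module
  intro j x y
  refine ⟨(key12 j x y).1, (key12 j x y).2, ?_, key4 j x y⟩
  have e1 := (key12 j x y).1
  have e2 := (key12 j x y).2
  have e3 := (key12 (j + 1) x y).2
  funext i k
  have E1 := congrFun (congrFun e1 i) k
  have E2 := congrFun (congrFun e2 i) k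
  have E3 := congrFun (congrFun e3 i) k
  simp only [Pi.add_apply, Pi.sub_apply, Pi.smul_apply, smul_eq_mul] at E1 E2 E3 ⊢
  linarith
end
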